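/- In the setting of the noisy linear model (valuations xᵀθ^s + ξ^s and xᵀθ^b + ξ^b in [−P,P], noises supported in [−C,C] with densities bounded by L, P = C + AB), fix ε > 0, set K = ⌈2P/ε⌉ + 3 and K = 〚−K,K〛. Let θ̂^s, θ̂^b ∈ ℝ^d satisfy |xᵀ(θ̂^s − θ^s)| ≤ ε and |xᵀ(θ̂^b − θ^b)| ≤ ε, and let A = {(k,k') ∈ K² : k' = ⌊(xᵀ(θ̂^s − θ̂^b) + kε)/ε⌋}. If (k*, k'*) ∈ argmax_{(k,k')∈A} EGFT(x, xᵀθ̂^s + kε), then max_{p ∈ [−P,P]} EGFT(x,p) − EGFT(x, xᵀθ̂^s + k*ε) ≤ 2LPε. -/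

import Mathlib

open MeasureTheory ProbabilityTheory Set
open scoped InnerProductSpace

/-!
Moving the price from `p` up to `q` changes the realised gain from trade only on the event
`p ≤ vb < q` that the buyer's valuation falls between the two prices, and there by at most the
spread `vb - vs ≤ 2P`. The buyer's noise has density at most `L`, so this event has probability
at most `L (q - p)`, and `p ↦ EGFT p` drops by at most `2LP (q - p)` to the right. For every
`p ∈ [-P, P]` the grid contains a price in `[p, p + ε]`, and `K` is large enough for its
buyer-side index to lie in the grid as well.
-/

noncomputable def gainFromTrade (vs vb q : ℝ) : ℝ :=
  if vs ≤ q ∧ q ≤ vb then vb - vs else 0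

section GainFromTrade

variable {vs vb p q D : ℝ}

lemma gainFromTrade_nonneg : 0 ≤ gainFromTrade vs vb q := by
  unfold gainFromTrade
  split_ifs with h
  · linarith [h.1, h.2]
  · rfl

lemma abs_gainFromTrade_le (hD : 0 ≤ D) (hspread : vb - vs ≤ D) :
    |gainFromTrade vs vb q| ≤ D := by
  rw [abs_of_nonneg gainFromTrade_nonneg]
  unfold gainFromTrade
  split_ifs <;> assumption

lemma gainFromTrade_sub_gainFromTrade_le (hD : 0 ≤ D) (hspread : vb - vs ≤ D) (hpq : p ≤ q) :
    gainFromTrade vs vb p - gainFromTrade vs vb q ≤ (Ico p q).indicator (fun _ => D) vb := by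
  unfold gainFromTrade Set.indicator
  simp only [mem_Ico]
  split_ifs <;> grind

end GainFromTrade

section ExpectedGain

variable {Ω : Type*} [MeasurableSpace Ω] {μ : Measure Ω} {Xs Xb : Ω → ℝ}

lemma measurable_gainFromTrade (hXs : Measurable Xs) (hXb : Measurable Xb) (q : ℝ) :
    Measurable fun ω => gainFromTrade (Xs ω) (Xb ω) q :=
  Measurable.ite ((measurableSet_le hXs measurable_const).inter
    (measurableSet_le measurable_const hXb)) (hXb.sub hXs) measurable_const

lemma integrable_gainFromTrade [IsFiniteMeasure μ] (hXs : Measurable Xs) (hXb : Measurable Xb)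
    {D : ℝ} (hD : 0 ≤ D) (hspread : ∀ᵐ ω ∂μ, Xb ω - Xs ω ≤ D) (q : ℝ) :
    Integrable (fun ω => gainFromTrade (Xs ω) (Xb ω) q) μ :=
  (integrable_const D).mono' (measurable_gainFromTrade hXs hXb q).aestronglyMeasurable
    (hspread.mono fun _ h => abs_gainFromTrade_le hD h)

theorem integral_gainFromTrade_sub_le [IsFiniteMeasure μ] (hXs : Measurable Xs)
    (hXb : Measurable Xb) {D L p q : ℝ} (hD : 0 ≤ D) (hspread : ∀ᵐ ω ∂μ, Xb ω - Xs ω ≤ D)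
    (hpq : p ≤ q) (hXb_Ico : μ.real (Xb ⁻¹' Ico p q) ≤ L * (q - p)) :
    ∫ ω, gainFromTrade (Xs ω) (Xb ω) p ∂μ - ∫ ω, gainFromTrade (Xs ω) (Xb ω) q ∂μ
      ≤ D * (L * (q - p)) := by
  have hint := integrable_gainFromTrade hXs hXb hD hspread (μ := μ)
  calc ∫ ω, gainFromTrade (Xs ω) (Xb ω) p ∂μ - ∫ ω, gainFromTrade (Xs ω) (Xb ω) q ∂μ
      = ∫ ω, (gainFromTrade (Xs ω) (Xb ω) p - gainFromTrade (Xs ω) (Xb ω) q) ∂μ :=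
        (integral_sub (hint p) (hint q)).symm
    _ ≤ ∫ ω, (Xb ⁻¹' Ico p q).indicator (fun _ => D) ω ∂μ :=
        integral_mono_ae ((hint p).sub (hint q))
          ((integrable_const D).indicator (hXb measurableSet_Ico))
          (hspread.mono fun _ h => gainFromTrade_sub_gainFromTrade_le hD h hpq)
    _ = μ.real (Xb ⁻¹' Ico p q) * D := integral_indicator_const D (hXb measurableSet_Ico)
    _ ≤ D * (L * (q - p)) := by rw [mul_comm]; exact mul_le_mul_of_nonneg_left hXb_Ico hD

end ExpectedGain

section Density

variable {Ω : Type*} [MeasurableSpace Ω] {μ : Measure Ω} {X : Ω → ℝ} {f : ℝ → ℝ}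

lemma ae_mem_of_map_eq_withDensity (hX : Measurable X)
    (hlaw : μ.map X = volume.withDensity fun u => ENNReal.ofReal (f u))
    {s : Set ℝ} (hs : MeasurableSet s) (hf : ∀ u ∉ s, f u = 0) : ∀ᵐ ω ∂μ, X ω ∈ s := by
  rw [ae_iff, show {ω | X ω ∉ s} = X ⁻¹' sᶜ from rfl, ← Measure.map_apply hX hs.compl, hlaw,
    withDensity_apply _ hs.compl]
  rw [setLIntegral_congr_fun hs.compl fun u hu => by rw [hf u hu, ENNReal.ofReal_zero]]
  exact lintegral_zero

lemma measureReal_preimage_le_of_map_eq_withDensity (hX : Measurable X)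
    (hlaw : μ.map X = volume.withDensity fun u => ENNReal.ofReal (f u))
    {L : ℝ} (hL : 0 ≤ L) (hfL : ∀ u, f u ≤ L) {s : Set ℝ} (hs : MeasurableSet s)
    (hs_fin : volume s ≠ ⊤) : μ.real (X ⁻¹' s) ≤ L * volume.real s := by
  refine ENNReal.toReal_le_of_le_ofReal (by positivity) ?_
  calc μ (X ⁻¹' s) = ∫⁻ u in s, ENNReal.ofReal (f u) := by
        rw [← Measure.map_apply hX hs, hlaw, withDensity_apply _ hs]
    _ ≤ ∫⁻ _ in s, ENNReal.ofReal L := lintegral_mono fun u => ENNReal.ofReal_le_ofReal (hfL u)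
    _ = ENNReal.ofReal (L * volume.real s) := by
        rw [setLIntegral_const, ENNReal.ofReal_mul hL, measureReal_def, ENNReal.ofReal_toReal hs_fin]

lemma measureReal_const_add_preimage_Ico_le (hX : Measurable X)
    (hlaw : μ.map X = volume.withDensity fun u => ENNReal.ofReal (f u))
    {L : ℝ} (hL : 0 ≤ L) (hfL : ∀ u, f u ≤ L) (c : ℝ) {a b : ℝ} (hab : a ≤ b) :
    μ.real ((fun ω => c + X ω) ⁻¹' Ico a b) ≤ L * (b - a) := by
  have h := measureReal_preimage_le_of_map_eq_withDensity hX hlaw hL hfL measurableSet_Ico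
    (measure_Ico_lt_top (a := a - c) (b := b - c)).ne
  rwa [Real.volume_real_Ico_of_le (by linarith), sub_sub_sub_cancel_right,
    ← preimage_const_add_Ico] at h

end Density

section Grid

variable {ε : ℝ}

lemma le_ceil_div_mul (hε : 0 < ε) (y : ℝ) : y ≤ ⌈y / ε⌉ * ε :=
  (div_le_iff₀ hε).mp (Int.le_ceil _)

lemma ceil_div_mul_lt (hε : 0 < ε) (y : ℝ) : ⌈y / ε⌉ * ε < y + ε := by
  have h := Int.ceil_lt_add_one (y / ε)
  rwa [div_add_one hε.ne', lt_div_iff₀ hε] at h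

lemma floor_div_mul_le (hε : 0 < ε) (y : ℝ) : ⌊y / ε⌋ * ε ≤ y :=
  (le_div_iff₀ hε).mp (Int.floor_le _)

lemma sub_lt_floor_div_mul (hε : 0 < ε) (y : ℝ) : y - ε < ⌊y / ε⌋ * ε := by
  have h := Int.sub_one_lt_floor (y / ε)
  rwa [div_sub_one hε.ne', div_lt_iff₀ hε] at h

lemma mem_Icc_of_abs_mul_le (hε : 0 < ε) {k : ℤ} {K : ℕ} (h : |(k : ℝ) * ε| ≤ K * ε) :
    k ∈ Finset.Icc (-(K : ℤ)) K := by
  rw [abs_mul, abs_of_pos hε] at h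
  have hk := abs_le.mp (le_of_mul_le_mul_right h hε)
  exact Finset.mem_Icc.mpr ⟨by exact_mod_cast hk.1, by exact_mod_cast hk.2⟩

lemma exists_grid_index {s b p P : ℝ} {K : ℕ} (hε : 0 < ε) (hs : |s| ≤ P + ε)
    (hb : |b| ≤ P + ε) (hp : |p| ≤ P) (hK : 2 * P + 2 * ε ≤ K * ε) :
    ∃ k : ℤ, k ∈ Finset.Icc (-(K : ℤ)) K ∧ ⌊(s - b + k * ε) / ε⌋ ∈ Finset.Icc (-(K : ℤ)) K ∧
      p ≤ s + k * ε ∧ s + k * ε ≤ p + ε := by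
  rw [abs_le] at hs hb hp
  have hk₁ := le_ceil_div_mul hε (p - s)
  have hk₂ := ceil_div_mul_lt hε (p - s)
  set k := ⌈(p - s) / ε⌉
  have hk'₁ := floor_div_mul_le hε (s - b + k * ε)
  have hk'₂ := sub_lt_floor_div_mul hε (s - b + k * ε)
  exact ⟨k, mem_Icc_of_abs_mul_le hε (abs_le.mpr ⟨by linarith, by linarith⟩),
    mem_Icc_of_abs_mul_le hε (abs_le.mpr ⟨by linarith, by linarith⟩), by linarith, by linarith⟩

end Grid

lemma abs_inner_le_mul {d : ℕ} {x θ : EuclideanSpace ℝ (Fin d)} {A B : ℝ} (hθ : ‖θ‖ ≤ A)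
    (hx : ‖x‖ ≤ B) : |⟪x, θ⟫_ℝ| ≤ A * B :=
  calc |⟪x, θ⟫_ℝ| ≤ ‖x‖ * ‖θ‖ := abs_real_inner_le_norm x θ
    _ ≤ B * A := mul_le_mul hx hθ (norm_nonneg _) ((norm_nonneg _).trans hx)
    _ = A * B := mul_comm _ _

theorem stmt_11_general
    {d : ℕ} (A B C L : ℝ)
    (P : ℝ) (hP : P = C + A * B)
    {Ω : Type*} [MeasurableSpace Ω] (Pr : Measure Ω) [IsProbabilityMeasure Pr]
    (ξs ξb : Ω → ℝ) (hmξs : Measurable ξs) (hmξb : Measurable ξb)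
    (fs fb : ℝ → ℝ)
    (hfb0 : ∀ u, 0 ≤ fb u)
    (hfbL : ∀ u, fb u ≤ L)
    (hfssupp : ∀ u, u ∉ Icc (-C) C → fs u = 0)
    (hfbsupp : ∀ u, u ∉ Icc (-C) C → fb u = 0)
    (hlaws : Measure.map ξs Pr = volume.withDensity (fun u => ENNReal.ofReal (fs u)))
    (hlawb : Measure.map ξb Pr = volume.withDensity (fun u => ENNReal.ofReal (fb u)))
    (θs θb x : EuclideanSpace ℝ (Fin d))
    (hθs : ‖θs‖ ≤ A) (hθb : ‖θb‖ ≤ A) (hx : ‖x‖ ≤ B)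
    (EGFT : ℝ → ℝ)
    (hEGFT : ∀ q, EGFT q =
      ∫ ω, (if ⟪x, θs⟫_ℝ + ξs ω ≤ q ∧ q ≤ ⟪x, θb⟫_ℝ + ξb ω
        then (⟪x, θb⟫_ℝ + ξb ω) - (⟪x, θs⟫_ℝ + ξs ω) else 0) ∂Pr)
    (ε : ℝ) (hε : 0 < ε)
    (K : ℕ) (hK : K = ⌈2 * P / ε⌉₊ + 3)
    (θhs θhb : EuclideanSpace ℝ (Fin d))
    (hθhs : |⟪x, θhs - θs⟫_ℝ| ≤ ε) (hθhb : |⟪x, θhb - θb⟫_ℝ| ≤ ε)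
    (Agrid : Finset (ℤ × ℤ))
    (hAgrid : Agrid = (Finset.Icc (-(K:ℤ)) (K:ℤ) ×ˢ Finset.Icc (-(K:ℤ)) (K:ℤ)).filter
      (fun kk => kk.2 = ⌊(⟪x, θhs - θhb⟫_ℝ + (kk.1 : ℝ) * ε) / ε⌋))
    (kstar : ℤ × ℤ)
    (hkstar_max : ∀ kk ∈ Agrid,
      EGFT (⟪x, θhs⟫_ℝ + (kk.1 : ℝ) * ε) ≤ EGFT (⟪x, θhs⟫_ℝ + (kstar.1 : ℝ) * ε)) :
    ∀ p ∈ Icc (-P) P,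
      EGFT p - EGFT (⟪x, θhs⟫_ℝ + (kstar.1 : ℝ) * ε) ≤ 2 * L * P * ε := by
  intro p hp
  have hL : 0 ≤ L := (hfb0 0).trans (hfbL 0)
  have hP0 : 0 ≤ P := by linarith [hp.1, hp.2]
  have hξs := ae_mem_of_map_eq_withDensity hmξs hlaws measurableSet_Icc hfssupp
  have hξb := ae_mem_of_map_eq_withDensity hmξb hlawb measurableSet_Icc hfbsupp
  have hC : 0 ≤ C := by obtain ⟨ω, hω⟩ := hξb.exists; linarith [hω.1, hω.2]
  have hms := abs_le.mp (abs_inner_le_mul hθs hx)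
  have hmb := abs_le.mp (abs_inner_le_mul hθb hx)
  have hspread : ∀ᵐ ω ∂Pr, (⟪x, θb⟫_ℝ + ξb ω) - (⟪x, θs⟫_ℝ + ξs ω) ≤ 2 * P := by
    filter_upwards [hξs, hξb] with ω hs hb
    linarith [hs.1, hb.2]
  rw [inner_sub_right, abs_le] at hθhs hθhb
  have hsP : |⟪x, θhs⟫_ℝ| ≤ P + ε := abs_le.mpr ⟨by linarith, by linarith⟩
  have hbP : |⟪x, θhb⟫_ℝ| ≤ P + ε := abs_le.mpr ⟨by linarith, by linarith⟩
  have hKε : 2 * P + 2 * ε ≤ K * ε := by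
    have := (div_le_iff₀ hε).mp (Nat.le_ceil (2 * P / ε))
    rw [hK]; push_cast; linarith
  obtain ⟨k, hk, hk', hpk, hkp⟩ := exists_grid_index hε hsP hbP (abs_le.mpr hp) hKε
  have hmem : (k, ⌊(⟪x, θhs - θhb⟫_ℝ + k * ε) / ε⌋) ∈ Agrid := by
    rw [hAgrid, Finset.mem_filter, Finset.mem_product, inner_sub_right]
    exact ⟨⟨hk, hk'⟩, rfl⟩
  have hdrop := integral_gainFromTrade_sub_le (hmξs.const_add _) (hmξb.const_add _)
    (by positivity) hspread hpk
    (measureReal_const_add_preimage_Ico_le hmξb hlawb hL hfbL ⟪x, θb⟫_ℝ hpk)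
  calc EGFT p - EGFT (⟪x, θhs⟫_ℝ + kstar.1 * ε)
      ≤ EGFT p - EGFT (⟪x, θhs⟫_ℝ + k * ε) := by linarith [hkstar_max _ hmem]
    _ ≤ 2 * P * (L * (⟪x, θhs⟫_ℝ + k * ε - p)) := by rw [hEGFT, hEGFT]; exact hdrop
    _ ≤ 2 * L * P * ε := by nlinarith [mul_nonneg hL hP0]

/-- Lemma 8 of the paper: discretization error. The best price of the
form `⟪x, θ̂s⟫ + kε` over the feasible grid `A` is within `2LPε` of the best price
in `[-P, P]`. -/
theorem stmt_11
    {d : ℕ} (A B C L : ℝ)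
    (P : ℝ) (hP : P = C + A * B)
    {Ω : Type*} [MeasurableSpace Ω] (Pr : Measure Ω) [IsProbabilityMeasure Pr]
    (ξs ξb : Ω → ℝ) (hmξs : Measurable ξs) (hmξb : Measurable ξb)
    (hindep : IndepFun ξs ξb Pr)
    (fs fb : ℝ → ℝ)
    (hfs0 : ∀ u, 0 ≤ fs u) (hfb0 : ∀ u, 0 ≤ fb u)
    (hfsL : ∀ u, fs u ≤ L) (hfbL : ∀ u, fb u ≤ L)
    (hfssupp : ∀ u, u ∉ Icc (-C) C → fs u = 0)
    (hfbsupp : ∀ u, u ∉ Icc (-C) C → fb u = 0)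
    (hlaws : Measure.map ξs Pr = volume.withDensity (fun u => ENNReal.ofReal (fs u)))
    (hlawb : Measure.map ξb Pr = volume.withDensity (fun u => ENNReal.ofReal (fb u)))
    (hcents : ∫ ω, ξs ω ∂Pr = 0) (hcentb : ∫ ω, ξb ω ∂Pr = 0)
    (θs θb x : EuclideanSpace ℝ (Fin d))
    (hθs : ‖θs‖ ≤ A) (hθb : ‖θb‖ ≤ A) (hx : ‖x‖ ≤ B)
    (EGFT : ℝ → ℝ)
    (hEGFT : ∀ q, EGFT q =
      ∫ ω, (if ⟪x, θs⟫_ℝ + ξs ω ≤ q ∧ q ≤ ⟪x, θb⟫_ℝ + ξb ω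
        then (⟪x, θb⟫_ℝ + ξb ω) - (⟪x, θs⟫_ℝ + ξs ω) else 0) ∂Pr)
    (ε : ℝ) (hε : 0 < ε)
    (K : ℕ) (hK : K = ⌈2 * P / ε⌉₊ + 3)
    (θhs θhb : EuclideanSpace ℝ (Fin d))
    (hθhs : |⟪x, θhs - θs⟫_ℝ| ≤ ε) (hθhb : |⟪x, θhb - θb⟫_ℝ| ≤ ε)
    (Agrid : Finset (ℤ × ℤ))
    (hAgrid : Agrid = (Finset.Icc (-(K:ℤ)) (K:ℤ) ×ˢ Finset.Icc (-(K:ℤ)) (K:ℤ)).filter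
      (fun kk => kk.2 = ⌊(⟪x, θhs - θhb⟫_ℝ + (kk.1 : ℝ) * ε) / ε⌋))
    (kstar : ℤ × ℤ) (hkstar_mem : kstar ∈ Agrid)
    (hkstar_max : ∀ kk ∈ Agrid,
      EGFT (⟪x, θhs⟫_ℝ + (kk.1 : ℝ) * ε) ≤ EGFT (⟪x, θhs⟫_ℝ + (kstar.1 : ℝ) * ε)) :
    ∀ p ∈ Icc (-P) P,
      EGFT p - EGFT (⟪x, θhs⟫_ℝ + (kstar.1 : ℝ) * ε) ≤ 2 * L * P * ε :=
  stmt_11_general A B C L P hP Pr ξs ξb hmξs hmξb fs fb hfb0 hfbL hfssupp hfbsupp hlaws hlawb θs θb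
    x hθs hθb hx EGFT hEGFT ε hε K hK θhs θhb hθhs hθhb Agrid hAgrid kstar hkstar_max
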